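/- arXiv:1408.3867 — 3 statements merged into one kernel-verified Lean document; each statement's English description precedes it below -/
import Mathlib

section
/- Let S ⊂ ℝ³ be a measurable set of finite Lebesgue volume V and let z ∈ ℝ³. Then ∫_S |y − z|^{−1} dy ≤ 2π (3V/(4π))^{2/3}; that is, the integral over S of the weakly singular kernel 1/|y−z| is bounded by its value over the ball centered at z having the same volume V. -/
/-!
Outside the ball `B` of volume `V` centred at `z` the kernel `1/|y - z|` is at most `1/R`, inside
it is at least `1/R`, and `S \ B`, `B \ S` have equal volume; so moving the mass of `S` outside `B`
into `B \ S` can only increase the integral, and the integral over `B` is `2πR²` in polar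
coordinates.
-/

open MeasureTheory Metric Set Real

open scoped ENNReal

section Bathtub

variable {α : Type*} [MeasurableSpace α] {μ : Measure α}

theorem measure_sdiff_le_measure_sdiff {S B : Set α} (hS : MeasurableSet S) (hB : MeasurableSet B)
    (hSB : μ S ≤ μ B) (hS_fin : μ S ≠ ∞) : μ (S \ B) ≤ μ (B \ S) := by
  have hinter : μ (S ∩ B) ≠ ∞ := measure_ne_top_of_subset inter_subset_left hS_fin
  refine (ENNReal.add_le_add_iff_right hinter).1 ?_
  rw [measure_sdiff_add_inter S hB, inter_comm, measure_sdiff_add_inter B hS]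
  exact hSB

theorem setLIntegral_le_setLIntegral_of_le_const_of_const_le {f : α → ℝ≥0∞} {S B : Set α}
    (hS : MeasurableSet S) (hB : MeasurableSet B) (hSB : μ S ≤ μ B) (hS_fin : μ S ≠ ∞)
    (c : ℝ≥0∞) (h_out : ∀ᵐ y ∂μ, y ∈ S \ B → f y ≤ c) (h_in : ∀ᵐ y ∂μ, y ∈ B \ S → c ≤ f y) :
    ∫⁻ y in S, f y ∂μ ≤ ∫⁻ y in B, f y ∂μ :=
  calc ∫⁻ y in S, f y ∂μ = ∫⁻ y in S ∩ B, f y ∂μ + ∫⁻ y in S \ B, f y ∂μ :=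
        (lintegral_inter_add_sdiff f S hB).symm
    _ ≤ ∫⁻ y in S ∩ B, f y ∂μ + c * μ (S \ B) := by
        gcongr
        exact (setLIntegral_mono_ae' (hS.diff hB) h_out).trans_eq (setLIntegral_const _ c)
    _ ≤ ∫⁻ y in B ∩ S, f y ∂μ + c * μ (B \ S) := by
        rw [inter_comm]
        gcongr _ + c * ?_
        exact measure_sdiff_le_measure_sdiff hS hB hSB hS_fin
    _ ≤ ∫⁻ y in B ∩ S, f y ∂μ + ∫⁻ y in B \ S, f y ∂μ := by
        gcongr
        exact (setLIntegral_const _ c).symm.trans_le (setLIntegral_mono_ae' (hB.diff hS) h_in)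
    _ = ∫⁻ y in B, f y ∂μ := lintegral_inter_add_sdiff f B hS

end Bathtub

theorem setIntegral_one_div_dist_le_ball {E : Type*} [MetricSpace E] [MeasurableSpace E]
    [OpensMeasurableSpace E] {μ : Measure E} [NullSingletonClass μ] {S : Set E}
    (hS : MeasurableSet S) (z : E) {R : ℝ} (hSR : μ S ≤ μ (ball z R)) (hS_fin : μ S ≠ ∞)
    (hint : IntegrableOn (fun y ↦ 1 / dist y z) (ball z R) μ) :
    ∫ y in S, 1 / dist y z ∂μ ≤ ∫ y in ball z R, 1 / dist y z ∂μ := by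
  rcases le_or_gt R 0 with hR | hR
  · rw [ball_eq_empty.2 hR, measure_empty, nonpos_iff_eq_zero] at hSR
    simp [Measure.restrict_eq_zero.2 hSR, ball_eq_empty.2 hR]
  have hf_nonneg : ∀ y, 0 ≤ 1 / dist y z := fun y ↦ by positivity
  have hf_meas : Measurable fun y ↦ 1 / dist y z := by fun_prop
  have hlint : ∫⁻ y in S, ENNReal.ofReal (1 / dist y z) ∂μ ≤
      ∫⁻ y in ball z R, ENNReal.ofReal (1 / dist y z) ∂μ := by
    refine setLIntegral_le_setLIntegral_of_le_const_of_const_le hS measurableSet_ball hSR hS_fin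
      (ENNReal.ofReal (1 / R)) (ae_of_all _ fun y hy ↦ ?_) ?_
    · gcongr
      simpa using hy.2
    -- only almost everywhere: at `y = z` the kernel takes the junk value `1 / 0 = 0`
    · filter_upwards [μ.ae_ne z] with y hyz hy
      gcongr
      · exact dist_pos.2 hyz
      · exact (mem_ball.1 hy.1).le
  rw [integral_eq_lintegral_of_nonneg_ae (ae_of_all _ hf_nonneg) hf_meas.aestronglyMeasurable,
    integral_eq_lintegral_of_nonneg_ae (ae_of_all _ hf_nonneg) hf_meas.aestronglyMeasurable]
  exact ENNReal.toReal_mono hint.lintegral_lt_top.ne hlint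

theorem integral_one_div_dist_ball_fin_three (z : EuclideanSpace ℝ (Fin 3)) {R : ℝ} (hR : 0 ≤ R) :
    ∫ y in ball z R, 1 / dist y z = 2 * π * R ^ 2 := by
  set g : ℝ → ℝ := (Iio R).indicator fun r ↦ r⁻¹
  have hradial : ∫ y in ball z R, 1 / dist y z = ∫ x : EuclideanSpace ℝ (Fin 3), g ‖x‖ := by
    rw [← integral_indicator measurableSet_ball, ← integral_sub_right_eq_self (fun x ↦ g ‖x‖) z]
    congr 1 with x
    simp [g, indicator, mem_ball, dist_eq_norm]
  have hpolar : ∫ r in Ioi (0 : ℝ), r ^ 2 • g r = R ^ 2 / 2 := by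
    calc ∫ r in Ioi (0 : ℝ), r ^ 2 • g r = ∫ r in Ioi (0 : ℝ), (Iio R).indicator id r := by
          refine setIntegral_congr_fun measurableSet_Ioi fun r (hr : 0 < r) ↦ ?_
          by_cases hrR : r < R
          · simp [g, hrR, pow_two, hr.ne']
          · simp [g, hrR]
      _ = ∫ r in (0)..R, r := by
          rw [setIntegral_indicator measurableSet_Iio, Ioi_inter_Iio,
            intervalIntegral.integral_of_le hR, integral_Ioc_eq_integral_Ioo]
          rfl
      _ = R ^ 2 / 2 := by simp
  have hunit : volume.real (ball (0 : EuclideanSpace ℝ (Fin 3)) 1) = π * 4 / 3 := by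
    simp [Measure.real, ENNReal.toReal_ofReal (by positivity : 0 ≤ π * 4 / 3)]
  rw [hradial, integral_fun_norm_addHaar, finrank_euclideanSpace_fin, hunit, hpolar]
  simp only [nsmul_eq_mul, smul_eq_mul]
  ring

theorem integrableOn_one_div_dist_ball_fin_three (z : EuclideanSpace ℝ (Fin 3)) (R : ℝ) :
    IntegrableOn (fun y ↦ 1 / dist y z) (ball z R) := by
  rcases le_or_gt R 0 with hR | hR
  · simp [ball_eq_empty.2 hR]
  · refine Integrable.of_integral_ne_zero ?_
    rw [integral_one_div_dist_ball_fin_three z hR.le]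
    positivity

theorem volume_ball_fin_three_eq_ofReal (z : EuclideanSpace ℝ (Fin 3)) {V : ℝ} (hV : 0 ≤ V) :
    volume (ball z ((3 * V / (4 * π)) ^ ((1 : ℝ) / 3))) = ENNReal.ofReal V := by
  have hcube : ((3 * V / (4 * π)) ^ ((1 : ℝ) / 3)) ^ 3 = 3 * V / (4 * π) := by
    rw [← rpow_natCast, ← rpow_mul (by positivity)]
    norm_num
  rw [EuclideanSpace.volume_ball_fin_three, ← ENNReal.ofReal_pow (by positivity), hcube,
    ← ENNReal.ofReal_mul (by positivity)]
  congr 1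
  field_simp

theorem stmt5 (S : Set (EuclideanSpace ℝ (Fin 3))) (hS : MeasurableSet S)
    (V : ℝ) (hV0 : 0 ≤ V) (hV : volume S = ENNReal.ofReal V)
    (z : EuclideanSpace ℝ (Fin 3)) :
    (∫ y in S, 1 / dist y z ∂(volume)) ≤
      2 * Real.pi * (3 * V / (4 * Real.pi)) ^ ((2 : ℝ) / 3) := by
  set q := 3 * V / (4 * π)
  have hball := volume_ball_fin_three_eq_ofReal z hV0
  have hsq : (q ^ ((1 : ℝ) / 3)) ^ 2 = q ^ ((2 : ℝ) / 3) := by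
    rw [← rpow_natCast, ← rpow_mul (by positivity)]
    norm_num
  calc ∫ y in S, 1 / dist y z ≤ ∫ y in ball z (q ^ ((1 : ℝ) / 3)), 1 / dist y z :=
        setIntegral_one_div_dist_le_ball hS z (hV.trans hball.symm).le
          (hV ▸ ENNReal.ofReal_ne_top) (integrableOn_one_div_dist_ball_fin_three z _)
    _ = 2 * π * q ^ ((2 : ℝ) / 3) := by
        rw [integral_one_div_dist_ball_fin_three z (by positivity), hsq]
end

section
/- Fix κ ≥ 0 and z ∈ ℝ³. Let Q ⊂ ℝ³ be a convex, compact set with dist(z, Q) ≥ δ > 0, let z₀ ∈ Q, and let Y : ℝ³ → ℂ be continuously differentiable on an open set containing Q. Then |∫_Q Φ_κ(z, y) Y(y) dy − Φ_κ(z, z₀) Y(z₀) · vol(Q)| ≤ vol(Q) · (sup_{y∈Q} |y − z₀|) · (1/(4πδ)) · [ (1/δ + κ) · sup_{y∈Q} |Y(y)| + sup_{y∈Q} ‖∇Y(y)‖ ]. -/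
/-!
On `Q` the function `f = Φ_κ(z, ·) Y` is differentiable with `‖Df‖ ≤ L`, where
`L = (4πδ)⁻¹ ((1/δ + κ) sup ‖Y‖ + sup ‖DY‖)`: indeed `|Φ_κ(z, y)| ≤ (4πδ)⁻¹`, and writing
`Φ_κ(z, y) = h(|z − y|)` with `h(t) = e^{iκt}/(4πt)`, we have `h'(t) = h(t)(iκ − 1/t)`, so
`|h'(t)| ≤ (4πδ)⁻¹ (1/δ + κ)` for `t ≥ δ`, while `y ↦ |z − y|` is 1-Lipschitz. Since `Q` is
convex, the mean value inequality gives `‖f y − f z₀‖ ≤ L ‖y − z₀‖` on `Q`; integrate over `Q`.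
-/

open MeasureTheory

/-- The fundamental solution of the Helmholtz equation in `ℝ³` with wave number `κ`:
`Φ_κ(x,y) = e^{iκ|x−y|} / (4π|x−y|)`. -/
noncomputable def Phi (κ : ℝ) (x y : EuclideanSpace ℝ (Fin 3)) : ℂ :=
  Complex.exp (Complex.I * (κ : ℂ) * ((dist x y : ℝ) : ℂ)) /
    (((4 * Real.pi * dist x y : ℝ) : ℂ))

theorem IsCompact.le_ciSup_of_continuousOn {X : Type*} [TopologicalSpace X] {K : Set X}
    {g : X → ℝ} (hK : IsCompact K) (hg : ContinuousOn g K) {x : X} (hx : x ∈ K) :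
    g x ≤ ⨆ y : K, g y :=
  le_ciSup (f := fun y : K => g y) (by simpa [← Set.image_eq_range] using hK.bddAbove_image hg)
    ⟨x, hx⟩

theorem norm_fderiv_mul_le {E 𝔸 : Type*} [NormedAddCommGroup E] [NormedSpace ℝ E]
    [NormedField 𝔸] [NormedAlgebra ℝ 𝔸] {f g : E → 𝔸} {x : E}
    (hf : DifferentiableAt ℝ f x) (hg : DifferentiableAt ℝ g x) :
    ‖fderiv ℝ (fun y => f y * g y) x‖ ≤ ‖f x‖ * ‖fderiv ℝ g x‖ + ‖g x‖ * ‖fderiv ℝ f x‖ := by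
  rw [show (fun y => f y * g y) = f * g from rfl, fderiv_mul hf hg]
  exact (norm_add_le _ _).trans (by rw [norm_smul, norm_smul])

theorem norm_setIntegral_sub_smul_le_of_norm_fderiv_le {E F : Type*} [NormedAddCommGroup E]
    [NormedSpace ℝ E] [MeasurableSpace E] [OpensMeasurableSpace E] [NormedAddCommGroup F]
    [NormedSpace ℝ F] [CompleteSpace F] {μ : Measure E} [IsFiniteMeasureOnCompacts μ]
    {s : Set E} {f : E → F} {C : ℝ} {x₀ : E} (hs : Convex ℝ s) (hK : IsCompact s) (hx₀ : x₀ ∈ s)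
    (hf : ∀ x ∈ s, DifferentiableAt ℝ f x) (hC : ∀ x ∈ s, ‖fderiv ℝ f x‖ ≤ C) :
    ‖∫ x in s, f x ∂μ - (μ s).toReal • f x₀‖ ≤ (μ s).toReal * (⨆ x : s, ‖(x : E) - x₀‖) * C := by
  set R := ⨆ x : s, ‖(x : E) - x₀‖
  have hC₀ : 0 ≤ C := (norm_nonneg _).trans (hC x₀ hx₀)
  have hR : ∀ x ∈ s, ‖x - x₀‖ ≤ R := fun x hx =>
    hK.le_ciSup_of_continuousOn (continuous_id.sub continuous_const).norm.continuousOn hx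
  have hvar : ∀ x ∈ s, ‖f x - f x₀‖ ≤ R * C := fun x hx => calc
    ‖f x - f x₀‖ ≤ C * ‖x - x₀‖ := hs.norm_image_sub_le_of_norm_fderiv_le hf hC hx₀ hx
    _ ≤ R * C := by rw [mul_comm]; exact mul_le_mul_of_nonneg_right (hR x hx) hC₀
  have hint : IntegrableOn f s μ :=
    ContinuousOn.integrableOn_compact hK fun x hx => (hf x hx).continuousAt.continuousWithinAt
  have hsub : ∫ x in s, f x ∂μ - (μ s).toReal • f x₀ = ∫ x in s, (f x - f x₀) ∂μ := by
    rw [integral_sub hint (integrableOn_const hK.measure_ne_top), setIntegral_const]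
    rfl
  rw [hsub, mul_assoc, mul_comm]
  exact norm_setIntegral_le_of_norm_le_const hK.measure_lt_top hvar

namespace Phi

noncomputable def profile (κ t : ℝ) : ℂ :=
  Complex.exp (Complex.I * κ * t) / ((4 * Real.pi * t : ℝ) : ℂ)

theorem eq_profile (κ : ℝ) (x : EuclideanSpace ℝ (Fin 3)) :
    Phi κ x = fun y => profile κ (dist x y) := rfl

theorem norm_profile (κ : ℝ) {t : ℝ} (ht : 0 ≤ t) : ‖profile κ t‖ = 1 / (4 * Real.pi * t) := by
  rw [profile, norm_div, Complex.norm_exp, Complex.norm_real, Real.norm_of_nonneg (by positivity)]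
  simp

theorem hasDerivAt_profile (κ : ℝ) {t : ℝ} (ht : t ≠ 0) :
    HasDerivAt (profile κ) (profile κ t * (Complex.I * κ - (t : ℂ)⁻¹)) t := by
  have hlin (c : ℂ) : HasDerivAt (fun s : ℝ => c * s) c t := by
    simpa using ((hasDerivAt_id t).ofReal_comp).const_mul c
  have hden : ((4 * Real.pi * t : ℝ) : ℂ) ≠ 0 := by
    exact_mod_cast mul_ne_zero (by positivity) ht
  have hden_deriv :
      HasDerivAt (fun s : ℝ => ((4 * Real.pi * s : ℝ) : ℂ)) ((4 * Real.pi : ℝ) : ℂ) t := by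
    simpa using ((hasDerivAt_id t).const_mul (4 * Real.pi)).ofReal_comp
  refine (((hlin (Complex.I * κ)).cexp).div hden_deriv hden).congr_deriv ?_
  have ht' : (t : ℂ) ≠ 0 := by exact_mod_cast ht
  have hπ : (Real.pi : ℂ) ≠ 0 := by exact_mod_cast Real.pi_ne_zero
  unfold profile
  push_cast
  field_simp

theorem norm_deriv_profile_le {κ δ t : ℝ} (hκ : 0 ≤ κ) (hδ : 0 < δ) (ht : δ ≤ t) :
    ‖profile κ t * (Complex.I * κ - (t : ℂ)⁻¹)‖ ≤ 1 / (4 * Real.pi * δ) * (1 / δ + κ) := by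
  have ht₀ : 0 < t := hδ.trans_le ht
  have hfac : ‖Complex.I * κ - (t : ℂ)⁻¹‖ ≤ 1 / t + κ := by
    refine (norm_sub_le _ _).trans_eq ?_
    rw [norm_mul, Complex.norm_I, Complex.norm_real, norm_inv, Complex.norm_real,
      Real.norm_of_nonneg hκ, Real.norm_of_nonneg ht₀.le]
    ring
  rw [norm_mul, norm_profile κ ht₀.le]
  calc 1 / (4 * Real.pi * t) * ‖Complex.I * κ - (t : ℂ)⁻¹‖
      ≤ 1 / (4 * Real.pi * t) * (1 / t + κ) := by gcongr
    _ ≤ 1 / (4 * Real.pi * δ) * (1 / δ + κ) := by gcongr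

theorem norm_le {κ δ : ℝ} {x y : EuclideanSpace ℝ (Fin 3)} (hδ : 0 < δ) (hxy : δ ≤ dist x y) :
    ‖Phi κ x y‖ ≤ 1 / (4 * Real.pi * δ) := by
  rw [eq_profile, norm_profile κ dist_nonneg]
  gcongr

theorem hasFDerivAt {κ : ℝ} {x y : EuclideanSpace ℝ (Fin 3)} (hxy : x ≠ y) :
    HasFDerivAt (Phi κ x)
      ((fderiv ℝ (dist x) y).smulRight
        (profile κ (dist x y) * (Complex.I * κ - ((dist x y : ℝ) : ℂ)⁻¹))) y := by
  have hdist : DifferentiableAt ℝ (dist x) y :=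
    (differentiableAt_const x).dist ℝ differentiableAt_id hxy
  have := (hasDerivAt_profile κ (dist_ne_zero.2 hxy)).hasFDerivAt.comp y hdist.hasFDerivAt
  rwa [eq_profile]

theorem norm_fderiv_le {κ δ : ℝ} {x y : EuclideanSpace ℝ (Fin 3)} (hκ : 0 ≤ κ) (hδ : 0 < δ)
    (hxy : δ ≤ dist x y) : ‖fderiv ℝ (Phi κ x) y‖ ≤ 1 / (4 * Real.pi * δ) * (1 / δ + κ) := by
  have hne : x ≠ y := dist_pos.1 (hδ.trans_le hxy)
  have hdist : ‖fderiv ℝ (dist x) y‖ ≤ 1 := by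
    simpa using norm_fderiv_le_of_lipschitz ℝ (LipschitzWith.dist_right x) (x₀ := y)
  rw [(hasFDerivAt hne).fderiv, ContinuousLinearMap.norm_smulRight_apply]
  calc _ ≤ 1 * (1 / (4 * Real.pi * δ) * (1 / δ + κ)) :=
        mul_le_mul hdist (norm_deriv_profile_le hκ hδ hxy) (norm_nonneg _) zero_le_one
    _ = _ := one_mul _

end Phi

theorem stmt10 (κ : ℝ) (hκ : 0 ≤ κ) (z : EuclideanSpace ℝ (Fin 3))
    (δ : ℝ) (hδ : 0 < δ)
    (Q : Set (EuclideanSpace ℝ (Fin 3))) (hconv : Convex ℝ Q) (hcomp : IsCompact Q)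
    (hdist : δ ≤ Metric.infDist z Q)
    (z₀ : EuclideanSpace ℝ (Fin 3)) (hz₀ : z₀ ∈ Q)
    (Y : EuclideanSpace ℝ (Fin 3) → ℂ) (U : Set (EuclideanSpace ℝ (Fin 3)))
    (hU : IsOpen U) (hQU : Q ⊆ U) (hY : ContDiffOn ℝ 1 Y U) :
    ‖(∫ y in Q, Phi κ z y * Y y ∂(volume)) - (volume Q).toReal • (Phi κ z z₀ * Y z₀)‖ ≤
      (volume Q).toReal * (⨆ y : Q, ‖(y : EuclideanSpace ℝ (Fin 3)) - z₀‖) *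
        (1 / (4 * Real.pi * δ)) *
        ((1 / δ + κ) * (⨆ y : Q, ‖Y (y : EuclideanSpace ℝ (Fin 3))‖) +
          ⨆ y : Q, ‖fderiv ℝ Y (y : EuclideanSpace ℝ (Fin 3))‖) := by
  have hzQ : ∀ y ∈ Q, δ ≤ dist z y := fun y hy =>
    hdist.trans (Metric.infDist_le_dist_of_mem hy)
  have hYdiff : ∀ y ∈ Q, DifferentiableAt ℝ Y y := fun y hy =>
    (hY.contDiffAt (hU.mem_nhds (hQU hy))).differentiableAt one_ne_zero
  have hPhidiff : ∀ y ∈ Q, DifferentiableAt ℝ (Phi κ z) y := fun y hy =>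
    (Phi.hasFDerivAt (dist_pos.1 (hδ.trans_le (hzQ y hy)))).differentiableAt
  set SY := ⨆ y : Q, ‖Y (y : EuclideanSpace ℝ (Fin 3))‖
  set SD := ⨆ y : Q, ‖fderiv ℝ Y (y : EuclideanSpace ℝ (Fin 3))‖
  have hSY : ∀ y ∈ Q, ‖Y y‖ ≤ SY := fun y hy =>
    hcomp.le_ciSup_of_continuousOn (hY.continuousOn.mono hQU).norm hy
  have hSD : ∀ y ∈ Q, ‖fderiv ℝ Y y‖ ≤ SD := fun y hy =>
    hcomp.le_ciSup_of_continuousOn ((hY.continuousOn_fderiv_of_isOpen hU le_rfl).mono hQU).norm hy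
  rw [mul_assoc _ (1 / (4 * Real.pi * δ))]
  refine norm_setIntegral_sub_smul_le_of_norm_fderiv_le hconv hcomp hz₀
    (fun y hy => (hPhidiff y hy).mul (hYdiff y hy)) fun y hy => ?_
  calc ‖fderiv ℝ (fun y => Phi κ z y * Y y) y‖
      ≤ ‖Phi κ z y‖ * ‖fderiv ℝ Y y‖ + ‖Y y‖ * ‖fderiv ℝ (Phi κ z) y‖ :=
        norm_fderiv_mul_le (hPhidiff y hy) (hYdiff y hy)
    _ ≤ 1 / (4 * Real.pi * δ) * SD + SY * (1 / (4 * Real.pi * δ) * (1 / δ + κ)) := by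
        gcongr
        exacts [Phi.norm_le hδ (hzQ y hy), hSD y hy, (norm_nonneg _).trans (hSY y hy), hSY y hy,
          Phi.norm_fderiv_le hκ hδ (hzQ y hy)]
    _ = _ := by ring
end

section
/- Fix κ ≥ 0. Let Ω ⊂ ℝ³ be a measurable set of finite Lebesgue volume V and let q : Ω → ℂ be measurable with |q(y)| ≤ Q₀ for almost every y ∈ Ω. Then the integral operator V defined by (Vf)(x) := ∫_Ω Φ_κ(x, y) q(y) f(y) dy maps L²(Ω) boundedly into L²(Ω), with ‖Vf‖_{L²(Ω)} ≤ (Q₀/2) · (3V/(4π))^{2/3} · ‖f‖_{L²(Ω)} for every f ∈ L²(Ω). -/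
/-!
Since `|Φ_κ(x,y)| = 1/(4π|x-y|)`, the operator is dominated by the symmetric positive kernel
`k(x,y) = Q₀/(4π|x-y|)` and, by the Schur test (Cauchy–Schwarz against the weight `k(x,·)`
followed by Tonelli), its `L²(Ω)` norm is at most `sup_x ∫_Ω k(x,y) dy`. Among all sets of volume
`V`, the integral of the radially decreasing function `1/|x-y|` is largest on the ball of radius
`R = (3V/(4π))^{1/3}` about `x`, where polar coordinates give `∫_{B(x,R)} dy/|x-y| = 2πR²`.
-/

open MeasureTheory

open Metric Set Function Real
open scoped ENNReal

section

variable {α : Type*} [MeasurableSpace α] {μ : Measure α}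

lemma sq_lintegral_mul_le (w g : α → ℝ≥0∞) (hw : AEMeasurable w μ) (hg : AEMeasurable g μ) :
    (∫⁻ x, w x * g x ∂μ) ^ 2 ≤ (∫⁻ x, w x ∂μ) * ∫⁻ x, w x * g x ^ 2 ∂μ := by
  have hsqrt : ∀ a : ℝ≥0∞, (a ^ (2⁻¹ : ℝ)) ^ (2 : ℝ) = a := ENNReal.rpow_inv_rpow two_ne_zero
  have hcs := ENNReal.lintegral_mul_le_Lp_mul_Lq μ Real.HolderConjugate.two_two
    (hw.pow_const (2⁻¹ : ℝ)) ((hw.pow_const (2⁻¹ : ℝ)).mul hg)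
  simp only [Pi.mul_apply, ← mul_assoc, ENNReal.mul_rpow_of_nonneg _ _ zero_le_two, hsqrt,
    ← ENNReal.rpow_add_of_nonneg _ _ (inv_nonneg.2 zero_le_two) (inv_nonneg.2 zero_le_two),
    show (2⁻¹ + 2⁻¹ : ℝ) = 1 by norm_num, ENNReal.rpow_one, ENNReal.rpow_two, one_div] at hcs
  calc (∫⁻ x, w x * g x ∂μ) ^ 2
      ≤ ((∫⁻ x, w x ∂μ) ^ (2⁻¹ : ℝ) * (∫⁻ x, w x * g x ^ 2 ∂μ) ^ (2⁻¹ : ℝ)) ^ (2 : ℝ) := by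
        rw [← ENNReal.rpow_two]; gcongr
    _ = (∫⁻ x, w x ∂μ) * ∫⁻ x, w x * g x ^ 2 ∂μ := by
        rw [ENNReal.mul_rpow_of_nonneg _ _ zero_le_two, hsqrt, hsqrt]

lemma lintegral_sq_lintegral_mul_le [SFinite μ] {k : α → α → ℝ≥0∞} (hk : Measurable (uncurry k))
    {A B : ℝ≥0∞} (hrow : ∀ x, ∫⁻ y, k x y ∂μ ≤ A) (hcol : ∀ y, ∫⁻ x, k x y ∂μ ≤ B)
    {g : α → ℝ≥0∞} (hg : AEMeasurable g μ) :
    ∫⁻ x, (∫⁻ y, k x y * g y ∂μ) ^ 2 ∂μ ≤ A * B * ∫⁻ y, g y ^ 2 ∂μ := by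
  have hkg : AEMeasurable (uncurry fun x y => k x y * g y ^ 2) (μ.prod μ) :=
    hk.aemeasurable.mul (hg.pow_const 2).comp_snd
  calc ∫⁻ x, (∫⁻ y, k x y * g y ∂μ) ^ 2 ∂μ
      ≤ ∫⁻ x, A * ∫⁻ y, k x y * g y ^ 2 ∂μ ∂μ := lintegral_mono fun x =>
        (sq_lintegral_mul_le _ _ hk.of_uncurry_left.aemeasurable hg).trans
          (by gcongr; exact hrow x)
    _ = A * ∫⁻ y, (∫⁻ x, k x y ∂μ) * g y ^ 2 ∂μ := by
        rw [lintegral_const_mul'' _ (f := fun x => ∫⁻ y, k x y * g y ^ 2 ∂μ)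
          hkg.lintegral_prod_right', lintegral_lintegral_swap hkg]
        congr 2 with y
        exact lintegral_mul_const'' _ hk.of_uncurry_right.aemeasurable
    _ ≤ A * ∫⁻ y, B * g y ^ 2 ∂μ := by gcongr with y; exact hcol y
    _ = A * B * ∫⁻ y, g y ^ 2 ∂μ := by rw [lintegral_const_mul'' _ (hg.pow_const 2), mul_assoc]

lemma sq_eLpNorm_two {E : Type*} [NormedAddCommGroup E] (f : α → E) :
    eLpNorm f 2 μ ^ 2 = ∫⁻ x, ‖f x‖ₑ ^ 2 ∂μ := by
  simpa [ENNReal.rpow_two] using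
    eLpNorm_nnreal_pow_eq_lintegral (f := f) (μ := μ) (p := 2) two_ne_zero

lemma eLpNorm_two_le_of_enorm_le_lintegral_mul [SFinite μ] {E F : Type*} [NormedAddCommGroup E]
    [NormedAddCommGroup F] {k : α → α → ℝ≥0∞} (hk : Measurable (uncurry k))
    {A : ℝ≥0∞} (hrow : ∀ x, ∫⁻ y, k x y ∂μ ≤ A) (hcol : ∀ y, ∫⁻ x, k x y ∂μ ≤ A)
    {T : α → E} {f : α → F} (hf : AEStronglyMeasurable f μ)
    (hT : ∀ x, ‖T x‖ₑ ≤ ∫⁻ y, k x y * ‖f y‖ₑ ∂μ) :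
    eLpNorm T 2 μ ≤ A * eLpNorm f 2 μ := by
  rw [← ENNReal.pow_le_pow_left_iff two_ne_zero, mul_pow, sq_eLpNorm_two, sq_eLpNorm_two, sq A]
  calc ∫⁻ x, ‖T x‖ₑ ^ 2 ∂μ ≤ ∫⁻ x, (∫⁻ y, k x y * ‖f y‖ₑ ∂μ) ^ 2 ∂μ := by
        gcongr with x; exact hT x
    _ ≤ A * A * ∫⁻ y, ‖f y‖ₑ ^ 2 ∂μ := lintegral_sq_lintegral_mul_le hk hrow hcol hf.enorm

lemma setLIntegral_le_setLIntegral_of_measure_le {s t : Set α} (hs : MeasurableSet s)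
    (ht : MeasurableSet t) (hst : μ s ≤ μ t) (hs_fin : μ s ≠ ∞) {f : α → ℝ≥0∞} {c : ℝ≥0∞}
    (hle : ∀ᵐ x ∂μ.restrict (s \ t), f x ≤ c) (hge : ∀ᵐ x ∂μ.restrict (t \ s), c ≤ f x) :
    ∫⁻ x in s, f x ∂μ ≤ ∫⁻ x in t, f x ∂μ := by
  have hdiff : μ (s \ t) ≤ μ (t \ s) := by
    refine ENNReal.le_of_add_le_add_left
      (measure_ne_top_of_subset (inter_subset_left (t := t)) hs_fin) ?_
    rwa [measure_inter_add_sdiff s ht, inter_comm, measure_inter_add_sdiff t hs]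
  calc ∫⁻ x in s, f x ∂μ = ∫⁻ x in s ∩ t, f x ∂μ + ∫⁻ x in s \ t, f x ∂μ :=
        (lintegral_inter_add_sdiff f s ht).symm
    _ ≤ ∫⁻ x in t ∩ s, f x ∂μ + c * μ (t \ s) := by
        rw [inter_comm]
        gcongr
        exact (lintegral_mono_ae hle).trans_eq (setLIntegral_const _ _) |>.trans (by gcongr)
    _ ≤ ∫⁻ x in t ∩ s, f x ∂μ + ∫⁻ x in t \ s, f x ∂μ := by
        gcongr
        exact (setLIntegral_const _ _).symm.trans_le (lintegral_mono_ae hge)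
    _ = ∫⁻ x in t, f x ∂μ := lintegral_inter_add_sdiff f t hs

end

lemma integrableOn_and_integral_Ioi_sq_mul_indicator_inv {R : ℝ} (hR : 0 ≤ R) :
    IntegrableOn (fun r : ℝ => r ^ 2 * (Iio R).indicator (·⁻¹) r) (Ioi 0) ∧
      ∫ r in Ioi (0 : ℝ), r ^ 2 * (Iio R).indicator (·⁻¹) r = R ^ 2 / 2 := by
  have h : EqOn (fun r : ℝ => r ^ 2 * (Iio R).indicator (·⁻¹) r) ((Iio R).indicator id)
      (Ioi 0) := by
    intro r (hr : 0 < r)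
    by_cases hrR : r < R
    · simp only [indicator, mem_Iio, hrR, ↓reduceIte, id_eq]
      field_simp
    · simp only [indicator, mem_Iio, hrR, ↓reduceIte, mul_zero]
  rw [setIntegral_congr_fun measurableSet_Ioi h, integrableOn_congr_fun h measurableSet_Ioi,
    integral_indicator measurableSet_Iio, IntegrableOn, integrable_indicator_iff measurableSet_Iio,
    Measure.restrict_restrict measurableSet_Iio, Iio_inter_Ioi, ← integral_Ioc_eq_integral_Ioo,
    ← intervalIntegral.integral_of_le hR, IntegrableOn, Measure.restrict_restrict measurableSet_Iio,
    Iio_inter_Ioi]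
  exact ⟨(intervalIntegral.intervalIntegrable_id.1).mono_set Ioo_subset_Ioc_self, by simp⟩

lemma lintegral_ball_inv_dist (x : EuclideanSpace ℝ (Fin 3)) {R : ℝ} (hR : 0 ≤ R) :
    ∫⁻ y in ball x R, ENNReal.ofReal (dist x y)⁻¹ = ENNReal.ofReal (2 * π * R ^ 2) := by
  obtain ⟨hint, hval⟩ := integrableOn_and_integral_Ioi_sq_mul_indicator_inv hR
  set f : ℝ → ℝ := (Iio R).indicator (·⁻¹)
  have hradial : ∫⁻ y in ball x R, ENNReal.ofReal (dist x y)⁻¹ =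
      ∫⁻ z : EuclideanSpace ℝ (Fin 3), ENNReal.ofReal (f ‖z‖) := by
    rw [← lintegral_indicator measurableSet_ball, ← lintegral_add_left_eq_self _ x]
    congr 1 with z
    by_cases hz : ‖z‖ < R <;> simp [f, indicator, hz]
  have hf_int : Integrable (fun z : EuclideanSpace ℝ (Fin 3) => f ‖z‖) :=
    (integrable_fun_norm_addHaar volume).2 (by simpa using hint)
  have hf_nonneg : 0 ≤ fun z : EuclideanSpace ℝ (Fin 3) => f ‖z‖ := fun z =>
    indicator_apply_nonneg fun _ => inv_nonneg.2 (norm_nonneg z)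
  rw [hradial, ← ofReal_integral_eq_lintegral_ofReal hf_int (.of_forall hf_nonneg),
    integral_fun_norm_addHaar]
  congr 1
  simp only [finrank_euclideanSpace_fin, Measure.real, EuclideanSpace.volume_ball_fin_three,
    smul_eq_mul, Nat.add_one_sub_one, hval, ENNReal.ofReal_one, one_pow, one_mul, nsmul_eq_mul,
    Nat.cast_ofNat]
  rw [ENNReal.toReal_ofReal (by positivity)]
  ring

lemma lintegral_inv_dist_le_of_volume_le (x : EuclideanSpace ℝ (Fin 3))
    {Ω : Set (EuclideanSpace ℝ (Fin 3))} (hΩ : MeasurableSet Ω) {R : ℝ} (hR : 0 ≤ R)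
    (hvol : volume Ω ≤ volume (ball x R)) :
    ∫⁻ y in Ω, ENNReal.ofReal (dist x y)⁻¹ ≤ ENNReal.ofReal (2 * π * R ^ 2) := by
  rw [← lintegral_ball_inv_dist x hR]
  refine setLIntegral_le_setLIntegral_of_measure_le hΩ measurableSet_ball hvol
    (hvol.trans_lt measure_ball_lt_top).ne (c := ENNReal.ofReal R⁻¹) ?_ ?_
  · rcases hR.eq_or_lt with rfl | hR
    · have hnull : volume (Ω \ ball x 0) = 0 :=
        measure_mono_null sdiff_subset (by simpa using hvol)
      simp only [Measure.restrict_eq_zero.2 hnull, ae_zero, Filter.eventually_bot]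
    refine ae_restrict_of_forall_mem (hΩ.diff measurableSet_ball) fun y hy => ?_
    have hRy : R ≤ dist x y := by simpa [dist_comm] using hy.2
    exact ENNReal.ofReal_le_ofReal (inv_anti₀ hR hRy)
  · filter_upwards [ae_restrict_of_ae (volume.ae_ne x),
      ae_restrict_mem (measurableSet_ball.diff hΩ)] with y hyx hy
    have hyR : dist x y < R := by simpa [dist_comm] using hy.1
    exact ENNReal.ofReal_le_ofReal (inv_anti₀ (dist_pos.2 (Ne.symm hyx)) hyR.le)

lemma lintegral_inv_dist_le (x : EuclideanSpace ℝ (Fin 3)) {Ω : Set (EuclideanSpace ℝ (Fin 3))}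
    (hΩ : MeasurableSet Ω) {V : ℝ} (hV0 : 0 ≤ V) (hV : volume Ω = ENNReal.ofReal V) :
    ∫⁻ y in Ω, ENNReal.ofReal (dist x y)⁻¹ ≤
      ENNReal.ofReal (2 * π * (3 * V / (4 * π)) ^ ((2 : ℝ) / 3)) := by
  have hb : 0 ≤ 3 * V / (4 * π) := by positivity
  set R := (3 * V / (4 * π)) ^ ((1 : ℝ) / 3)
  have hR : 0 ≤ R := by positivity
  have hRpow : ∀ n : ℕ, R ^ n = (3 * V / (4 * π)) ^ ((n : ℝ) / 3) := fun n => by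
    rw [← Real.rpow_natCast, ← Real.rpow_mul hb, one_div_mul_eq_div]
  have hvol : volume Ω = volume (ball x R) := by
    rw [hV, EuclideanSpace.volume_ball_fin_three, ← ENNReal.ofReal_pow hR,
      ← ENNReal.ofReal_mul (by positivity), hRpow, Nat.cast_ofNat, div_self three_ne_zero,
      Real.rpow_one]
    congr 1
    field_simp
  simpa [hRpow] using lintegral_inv_dist_le_of_volume_le x hΩ hR hvol.le

lemma norm_Phi (κ : ℝ) (x y : EuclideanSpace ℝ (Fin 3)) :
    ‖Phi κ x y‖ = (4 * π * dist x y)⁻¹ := by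
  have hphase : Complex.I * κ * (dist x y : ℝ) = ((κ * dist x y : ℝ) : ℂ) * Complex.I := by
    push_cast; ring
  rw [Phi, norm_div, hphase, Complex.norm_exp_ofReal_mul_I, Complex.norm_real, Real.norm_eq_abs,
    abs_of_nonneg (by positivity), one_div]

lemma enorm_Phi_mul_le (κ : ℝ) (x y : EuclideanSpace ℝ (Fin 3)) {a : ℂ} {Q₀ : ℝ} (ha : ‖a‖ ≤ Q₀) :
    ‖Phi κ x y * a‖ₑ ≤ ENNReal.ofReal (Q₀ / (4 * π)) * ENNReal.ofReal (dist x y)⁻¹ := by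
  rw [← ENNReal.ofReal_mul' (by positivity), ← ofReal_norm, norm_mul, norm_Phi]
  refine ENNReal.ofReal_le_ofReal ?_
  calc (4 * π * dist x y)⁻¹ * ‖a‖ ≤ (4 * π * dist x y)⁻¹ * Q₀ := by gcongr
    _ = Q₀ / (4 * π) * (dist x y)⁻¹ := by ring

theorem stmt12_general (κ : ℝ)
    (Ω : Set (EuclideanSpace ℝ (Fin 3))) (hΩ : MeasurableSet Ω)
    (V : ℝ) (hV0 : 0 ≤ V) (hV : volume Ω = ENNReal.ofReal V)
    (Q₀ : ℝ) (hQ₀ : 0 ≤ Q₀)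
    (q : EuclideanSpace ℝ (Fin 3) → ℂ)
    (hq : ∀ᵐ y ∂(volume.restrict Ω), ‖q y‖ ≤ Q₀) :
    ∀ f : EuclideanSpace ℝ (Fin 3) → ℂ, MemLp f 2 (volume.restrict Ω) →
      eLpNorm (fun x => ∫ y in Ω, Phi κ x y * q y * f y ∂(volume)) 2 (volume.restrict Ω) ≤
        ENNReal.ofReal ((Q₀ / 2) * (3 * V / (4 * Real.pi)) ^ ((2 : ℝ) / 3)) *
          eLpNorm f 2 (volume.restrict Ω) := by
  intro f hf
  set k : EuclideanSpace ℝ (Fin 3) → EuclideanSpace ℝ (Fin 3) → ℝ≥0∞ :=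
    fun x y => ENNReal.ofReal (Q₀ / (4 * π)) * ENNReal.ofReal (dist x y)⁻¹
  have hrow : ∀ x, ∫⁻ y in Ω, k x y ≤
      ENNReal.ofReal (Q₀ / (4 * π)) * ENNReal.ofReal (2 * π * (3 * V / (4 * π)) ^ ((2 : ℝ) / 3)) :=
    fun x => by
      rw [lintegral_const_mul' _ _ ENNReal.ofReal_ne_top]
      gcongr
      exact lintegral_inv_dist_le x hΩ hV0 hV
  have hconst : ENNReal.ofReal (Q₀ / (4 * π)) *
      ENNReal.ofReal (2 * π * (3 * V / (4 * π)) ^ ((2 : ℝ) / 3)) =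
        ENNReal.ofReal ((Q₀ / 2) * (3 * V / (4 * π)) ^ ((2 : ℝ) / 3)) := by
    rw [← ENNReal.ofReal_mul (by positivity)]
    congr 1
    field_simp
    ring
  rw [← hconst]
  refine eLpNorm_two_le_of_enorm_le_lintegral_mul (k := k) (by fun_prop) hrow
    (fun y => by simpa only [k, dist_comm] using hrow y) hf.aestronglyMeasurable fun x => ?_
  calc ‖∫ y in Ω, Phi κ x y * q y * f y‖ₑ ≤ ∫⁻ y in Ω, ‖Phi κ x y * q y * f y‖ₑ :=
        enorm_integral_le_lintegral_enorm _
    _ ≤ ∫⁻ y in Ω, k x y * ‖f y‖ₑ := lintegral_mono_ae <| hq.mono fun y hy => by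
        rw [enorm_mul]
        gcongr
        exact enorm_Phi_mul_le κ x y hy

theorem stmt12 (κ : ℝ) (hκ : 0 ≤ κ)
    (Ω : Set (EuclideanSpace ℝ (Fin 3))) (hΩ : MeasurableSet Ω)
    (V : ℝ) (hV0 : 0 ≤ V) (hV : volume Ω = ENNReal.ofReal V)
    (Q₀ : ℝ) (hQ₀ : 0 ≤ Q₀)
    (q : EuclideanSpace ℝ (Fin 3) → ℂ)
    (hq_meas : AEStronglyMeasurable q (volume.restrict Ω))
    (hq : ∀ᵐ y ∂(volume.restrict Ω), ‖q y‖ ≤ Q₀) :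
    ∀ f : EuclideanSpace ℝ (Fin 3) → ℂ, MemLp f 2 (volume.restrict Ω) →
      eLpNorm (fun x => ∫ y in Ω, Phi κ x y * q y * f y ∂(volume)) 2 (volume.restrict Ω) ≤
        ENNReal.ofReal ((Q₀ / 2) * (3 * V / (4 * Real.pi)) ^ ((2 : ℝ) / 3)) *
          eLpNorm f 2 (volume.restrict Ω) :=
  stmt12_general κ Ω hΩ V hV0 hV Q₀ hQ₀ q hq
end
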